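/- Every infinite-dimensional weakly compactly generated real Banach space has a separable quotient. -/

import Mathlib

/-- A Banach space has a separable quotient if there is a closed linear subspace `Y`
such that the quotient `X ⧸ Y` is infinite-dimensional and separable. -/
def HasSeparableQuotient (X : Type*) [NormedAddCommGroup X] [NormedSpace ℝ X] : Prop :=
  ∃ Y : Submodule ℝ X, IsClosed (Y : Set X) ∧
    ¬ FiniteDimensional ℝ (X ⧸ Y) ∧ TopologicalSpace.SeparableSpace (X ⧸ Y)

/-- A Banach space is weakly compactly generated if there is a weakly compact subset
whose closed linear span is the whole space. -/
def WeaklyCompactlyGenerated (X : Type*) [NormedAddCommGroup X] [NormedSpace ℝ X] : Prop :=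
  ∃ K : Set X, IsCompact (toWeakSpace ℝ X '' K) ∧
    Dense ((Submodule.span ℝ K : Submodule ℝ X) : Set X)

/-!
Pick functionals `f n` and vectors `x n` with `f n (x n) = 1` and `f m (x n) = 0` for `m < n`,
and let `Y` be the common kernel of the `f n`. The `x n` stay linearly independent in `X ⧸ Y`,
so the quotient is infinite-dimensional, and the `f n` descend to a sequence of functionals
separating the points of `X ⧸ Y`. Such a sequence embeds every weakly compact subset of `X ⧸ Y`
into `ℕ → ℝ`, so the image of the generating weakly compact set is weakly separable. Since closed
subspaces are weakly closed, the closed span of a weakly separable set is norm-separable, and that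
closed span is all of `X ⧸ Y`.
-/

open Set Topology TopologicalSpace

theorem exists_ne_zero_forall_mem_apply_eq_zero {𝕜 V : Type*} [Field 𝕜] [AddCommGroup V]
    [Module 𝕜 V] (hV : ¬ FiniteDimensional 𝕜 V) (s : Finset (Module.Dual 𝕜 V)) :
    ∃ x ≠ 0, ∀ f ∈ s, f x = 0 := by
  by_contra! h
  refine hV (.of_injective (LinearMap.pi fun f : s ↦ (f : V →ₗ[𝕜] 𝕜)) ?_)
  rw [← LinearMap.ker_eq_bot, LinearMap.ker_eq_bot']
  intro x hx
  by_contra hx0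
  obtain ⟨f, hf, hfx⟩ := h x hx0
  exact hfx (congrFun hx ⟨f, hf⟩)

theorem exists_triangular_dual_seq {𝕜 V : Type*} [Field 𝕜] [TopologicalSpace 𝕜]
    [IsTopologicalRing 𝕜] [AddCommGroup V] [TopologicalSpace V] [Module 𝕜 V]
    [SeparatingDual 𝕜 V] (hV : ¬ FiniteDimensional 𝕜 V) :
    ∃ (f : ℕ → StrongDual 𝕜 V) (x : ℕ → V),
      (∀ n, f n (x n) = 1) ∧ ∀ m n, m < n → f m (x n) = 0 := by
  classical
  obtain ⟨p, hp_one, hp_zero⟩ := exists_seq_of_forall_finset_exists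
    (fun p : StrongDual 𝕜 V × V ↦ p.1 p.2 = 1) (fun p q ↦ p.1 q.2 = 0) fun s _ ↦ by
      obtain ⟨x, hx0, hx⟩ := exists_ne_zero_forall_mem_apply_eq_zero hV
        (s.image fun p ↦ (p.1 : V →ₗ[𝕜] 𝕜))
      obtain ⟨f, hf⟩ := SeparatingDual.exists_eq_one (R := 𝕜) hx0
      exact ⟨(f, x), hf, fun p hp ↦ hx _ (Finset.mem_image_of_mem _ hp)⟩
  exact ⟨fun n ↦ (p n).1, fun n ↦ (p n).2, hp_one, hp_zero⟩

theorem linearIndependent_of_triangular {R M ι : Type*} [CommRing R] [AddCommGroup M]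
    [Module R M] [LinearOrder ι] {f : ι → Module.Dual R M} {v : ι → M}
    (h_one : ∀ i, f i (v i) = 1) (h_zero : ∀ i j, i < j → f i (v j) = 0) :
    LinearIndependent R v := by
  classical
  rw [linearIndependent_iff']
  intro s c hc i hi
  by_contra hci
  -- apply the functional of the least index carrying a nonzero coefficient
  set t := s.filter (c · ≠ 0)
  have ht : t.Nonempty := ⟨i, Finset.mem_filter.2 ⟨hi, hci⟩⟩
  obtain ⟨hi₀s, hci₀⟩ := Finset.mem_filter.1 (t.min'_mem ht)
  have hvanish : ∀ j ∈ s, j ≠ t.min' ht → f (t.min' ht) (c j • v j) = 0 := by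
    intro j hj hji
    by_cases hcj : c j = 0
    · simp [hcj]
    · have hlt := lt_of_le_of_ne (t.min'_le j (Finset.mem_filter.2 ⟨hj, hcj⟩)) hji.symm
      rw [map_smul, h_zero _ _ hlt, smul_zero]
  have := congrArg (f (t.min' ht)) hc
  rw [map_sum, map_zero, Finset.sum_eq_single_of_mem _ hi₀s hvanish, map_smul, h_one,
    smul_eq_mul, mul_one] at this
  exact hci₀ this

theorem IsCompact.isSeparable_of_separating {𝕜 E : Type*} [NormedField 𝕜] [AddCommGroup E]
    [Module 𝕜 E] [TopologicalSpace E] {f : ℕ → StrongDual 𝕜 E}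
    (hf : ∀ x, (∀ n, f n x = 0) → x = 0) {K : Set (WeakSpace 𝕜 E)} (hK : IsCompact K) :
    IsSeparable K := by
  have : CompactSpace K := isCompact_iff_compactSpace.mp hK
  have : MetrizableSpace K :=
    Metric.PiNatEmbed.TopologicalSpace.MetrizableSpace.of_countable_separating
      (fun n (k : K) ↦ f n ((toWeakSpace 𝕜 E).symm k))
      (fun n ↦ (WeakBilin.eval_continuous (topDualPairing 𝕜 E).flip (f n)).comp
        continuous_subtype_val)
      fun a b hab ↦ by
        by_contra! h
        refine hab (Subtype.ext ((toWeakSpace 𝕜 E).symm.injective (sub_eq_zero.1 ?_)))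
        rw [← map_sub]
        exact hf _ fun n ↦ by rw [map_sub, map_sub, h n, sub_self]
  simpa using (isCompact_univ (X := K)).isSeparable.image continuous_subtype_val

section LocallyConvex

variable {E : Type*} [AddCommGroup E] [TopologicalSpace E] [IsTopologicalAddGroup E]
  [Module ℝ E] [ContinuousSMul ℝ E] [LocallyConvexSpace ℝ E]

theorem isSeparable_closure_span_of_isSeparable_toWeakSpace {K : Set E}
    (hK : IsSeparable (toWeakSpace ℝ E '' K)) :
    IsSeparable (closure (Submodule.span ℝ K : Set E)) := by
  obtain ⟨D, hD, hKD⟩ := hK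
  set D' := (toWeakSpace ℝ E).symm '' D
  have hKD' : K ⊆ closure (Submodule.span ℝ D' : Set E) := by
    intro k hk
    have : toWeakSpace ℝ E k ∈ toWeakSpace ℝ E '' closure (Submodule.span ℝ D' : Set E) := by
      rw [(Submodule.span ℝ D').convex.toWeakSpace_closure ℝ]
      refine closure_mono ?_ (hKD ⟨k, hk, rfl⟩)
      intro d hd
      exact ⟨_, Submodule.subset_span ⟨d, hd, rfl⟩, by simp⟩
    simpa using this
  refine (hD.image (toWeakSpace ℝ E).symm).isSeparable.span (R := ℝ) |>.closure.mono ?_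
  exact closure_minimal
    (Submodule.span_le (p := (Submodule.span ℝ D').topologicalClosure) |>.2 hKD') isClosed_closure

theorem separableSpace_of_isCompact_of_dense_span_of_separating {K : Set E}
    (hK : IsCompact (toWeakSpace ℝ E '' K)) (hKspan : Dense (Submodule.span ℝ K : Set E))
    {f : ℕ → StrongDual ℝ E} (hf : ∀ x, (∀ n, f n x = 0) → x = 0) : SeparableSpace E := by
  rw [← isSeparable_univ_iff, ← hKspan.closure_eq]
  exact isSeparable_closure_span_of_isSeparable_toWeakSpace (hK.isSeparable_of_separating hf)

end LocallyConvex

theorem IsCompact.toWeakSpace_image_image {𝕜 E F : Type*} [CommSemiring 𝕜] [TopologicalSpace 𝕜]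
    [ContinuousAdd 𝕜] [ContinuousConstSMul 𝕜 𝕜] [AddCommMonoid E] [Module 𝕜 E]
    [TopologicalSpace E] [AddCommMonoid F] [Module 𝕜 F] [TopologicalSpace F] {K : Set E}
    (hK : IsCompact (toWeakSpace 𝕜 E '' K)) (T : E →L[𝕜] F) :
    IsCompact (toWeakSpace 𝕜 F '' (T '' K)) := by
  have := hK.image (WeakSpace.map T).continuous
  rw [image_image] at this
  rwa [image_image]

theorem separableQuotient_of_WCG_general
    (X : Type*) [NormedAddCommGroup X] [NormedSpace ℝ X]
    (hX : ¬ FiniteDimensional ℝ X) (hwcg : WeaklyCompactlyGenerated X) :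
    HasSeparableQuotient X := by
  obtain ⟨K, hK, hKspan⟩ := hwcg
  obtain ⟨f, x, hfx_one, hfx_zero⟩ := exists_triangular_dual_seq hX
  let Y : Submodule ℝ X := ⨅ n, (f n).ker
  let g (n : ℕ) : StrongDual ℝ (X ⧸ Y) := Y.liftQL (f n) (iInf_le _ n)
  refine ⟨Y, ?_, fun _ ↦ ?_, ?_⟩
  · simpa [Y, Submodule.coe_iInf] using isClosed_iInter fun n ↦ (f n).isClosed_ker
  · refine Module.Finite.not_linearIndependent_of_infinite _
      (linearIndependent_of_triangular (f := fun n ↦ (g n : X ⧸ Y →ₗ[ℝ] ℝ))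
        (v := fun n ↦ Y.mkQ (x n)) (fun n ↦ ?_) fun m n hmn ↦ ?_)
    exacts [hfx_one n, hfx_zero m n hmn]
  · refine separableSpace_of_isCompact_of_dense_span_of_separating
      (hK.toWeakSpace_image_image Y.mkQL) ?_ (f := g) ?_
    · rw [Submodule.coe_mkQL, Submodule.span_image, Submodule.map_coe]
      exact Y.mkQ_surjective.denseRange.dense_image Y.mkQL.continuous hKspan
    · intro ξ hξ
      obtain ⟨a, rfl⟩ := Y.mkQ_surjective ξ
      exact (Submodule.Quotient.mk_eq_zero Y).2 (Submodule.mem_iInf _ |>.2 hξ)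

theorem separableQuotient_of_WCG
    (X : Type*) [NormedAddCommGroup X] [NormedSpace ℝ X] [CompleteSpace X]
    (hX : ¬ FiniteDimensional ℝ X) (hwcg : WeaklyCompactlyGenerated X) :
    HasSeparableQuotient X :=
  separableQuotient_of_WCG_general X hX hwcg
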